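/- arXiv:1001.0889 — 5 statements merged into one kernel-verified Lean document; each statement's English description precedes it below -/
import Mathlib

section
/- [Lemma 3.1, case where the second agent never visits v; lifted form] Let c > 0, let a ≤ b be reals and let v ∈ ℝ. Let F, G : ℝ → ℝ be continuous on the interval [a,b] with F(a) = v and F(b) = v + c (the first agent executes one full tour of the cycle starting and ending at the point v), and suppose that G(t) − v ∉ cℤ for every t ∈ [a,b] (the second agent is never at the point v of the cycle during this period). Then there exists t ∈ [a,b] with F(t) − G(t) ∈ cℤ, i.e., the two agents meet on the cycle. -/
/-!
Rescale the second agent to `g t = (G t - v) / c`. Since `g` avoids the integers on the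
connected interval `[a, b]`, it stays in one band `(n, n + 1)`. Then `F - G` is at most `-n c`
at `a` (where `F a = v`) and at least `-n c` at `b` (where `F b = v + c`), so by the
intermediate value theorem it takes the value `-n c`.
-/

open Set

theorem IsPreconnected.floor_eq_of_forall_ne_intCast {α : Type*} [TopologicalSpace α]
    {s : Set α} (hs : IsPreconnected s) {f : α → ℝ} (hf : ContinuousOn f s)
    (hfs : ∀ x ∈ s, ∀ n : ℤ, f x ≠ n) {x y : α} (hx : x ∈ s) (hy : y ∈ s) :
    ⌊f x⌋ = ⌊f y⌋ := by
  have floor_mono : ∀ x ∈ s, ∀ y ∈ s, ⌊f x⌋ ≤ ⌊f y⌋ := by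
    intro x hx y hy
    by_contra! hlt
    have hmem : (⌊f x⌋ : ℝ) ∈ Icc (f y) (f x) := by
      refine ⟨(Int.lt_floor_add_one (f y)).le.trans ?_, Int.floor_le (f x)⟩
      exact_mod_cast hlt
    obtain ⟨z, hz, hfz⟩ := hs.intermediate_value hy hx hf hmem
    exact hfs z hz _ hfz
  exact (floor_mono x hx y hy).antisymm (floor_mono y hy x hx)

/-- **Lemma 3.1, case where the second agent never visits `v`; lifted form.**
Two agents move on a cycle of circumference `c > 0`, modeled via its universal cover `ℝ`:
two reals represent the same point of the cycle iff their difference lies in `cℤ`.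
If the first agent executes one full tour starting and ending at `v`
(`F a = v`, `F b = v + c`), while the second agent is never at the point `v`
of the cycle during `[a, b]`, then the two agents meet on the cycle. -/
theorem rendezvous_full_tour_other_avoids_v
    (c : ℝ) (hc : 0 < c) (a b v : ℝ) (hab : a ≤ b) (F G : ℝ → ℝ)
    (hF : ContinuousOn F (Set.Icc a b)) (hG : ContinuousOn G (Set.Icc a b))
    (hFa : F a = v) (hFb : F b = v + c)
    (hGv : ∀ t ∈ Set.Icc a b, ¬ ∃ n : ℤ, G t - v = n * c) :
    ∃ t ∈ Set.Icc a b, ∃ n : ℤ, F t - G t = n * c := by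
  set g : ℝ → ℝ := fun t => (G t - v) / c
  have hg : ContinuousOn g (Icc a b) := (hG.sub continuousOn_const).div_const c
  have hg_avoid : ∀ t ∈ Icc a b, ∀ n : ℤ, g t ≠ n := fun t ht n hn =>
    hGv t ht ⟨n, (div_eq_iff hc.ne').mp hn⟩
  have hG_eq : ∀ t, G t = v + c * g t := fun t => by
    simp only [g]; field_simp; ring
  have hband : ⌊g a⌋ = ⌊g b⌋ := isPreconnected_Icc.floor_eq_of_forall_ne_intCast hg hg_avoid
    (left_mem_Icc.mpr hab) (right_mem_Icc.mpr hab)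
  have hfloor_le : (⌊g a⌋ : ℝ) ≤ g a := Int.floor_le _
  have hlt_floor : g b < ⌊g a⌋ + 1 := hband ▸ Int.lt_floor_add_one _
  have hmem : -⌊g a⌋ * c ∈ Icc (F a - G a) (F b - G b) := by
    rw [hFa, hFb, hG_eq a, hG_eq b]
    constructor <;> nlinarith
  obtain ⟨t, ht, hFGt⟩ := intermediate_value_Icc hab (hF.sub hG) hmem
  exact ⟨t, ht, -⌊g a⌋, by push_cast; exact hFGt⟩
end

section
/- [Lemma 3.1, lifted form] Let c > 0, let a ≤ b be reals, let v ∈ ℝ and n ∈ ℤ. Let F, G : ℝ → ℝ be continuous on [a,b] and suppose: (i) F(a) = v and v ≤ F(t) ≤ v + c for all t ∈ [a,b] (the first agent performs part of a tour of the cycle, in the positive sense, starting at the point v); (ii) v + n·c ≤ G(t) ≤ v + (n+1)·c for all t ∈ [a,b] (the second agent does not traverse the point v of the cycle during this period); (iii) either F(b) = v + c (the first agent completes its tour) or G(b) = v + n·c (the second agent reaches the point v moving in the sense of rotation opposite to the first agent's tour). Then there exists t ∈ [a,b] with F(t) − G(t) ∈ cℤ, i.e., the two agents meet on the cycle. -/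
/-- **Lemma 3.1, lifted form.**
Two agents move on a cycle of circumference `c > 0`, modeled via its universal cover `ℝ`:
two reals represent the same point of the cycle iff their difference lies in `cℤ`.
Suppose the first agent performs part of a tour of the cycle in the positive sense,
starting at the point `v` (`F a = v` and `v ≤ F t ≤ v + c` on `[a,b]`),
the second agent does not traverse the point `v` of the cycle during this period
(`v + n·c ≤ G t ≤ v + (n+1)·c` on `[a,b]`), and either the first agent completes its tour
(`F b = v + c`) or the second agent reaches the point `v` moving in the opposite sense of
rotation (`G b = v + n·c`). Then the two agents meet on the cycle. -/
theorem rendezvous_tour_vs_nontraversal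
    (c : ℝ) (hc : 0 < c) (a b v : ℝ) (n : ℤ) (hab : a ≤ b) (F G : ℝ → ℝ)
    (hF : ContinuousOn F (Set.Icc a b)) (hG : ContinuousOn G (Set.Icc a b))
    (hFa : F a = v)
    (hFrange : ∀ t ∈ Set.Icc a b, v ≤ F t ∧ F t ≤ v + c)
    (hGrange : ∀ t ∈ Set.Icc a b, v + n * c ≤ G t ∧ G t ≤ v + (n + 1) * c)
    (hend : F b = v + c ∨ G b = v + n * c) :
    ∃ t ∈ Set.Icc a b, ∃ m : ℤ, F t - G t = m * c := by
  set D : ℝ → ℝ := fun t => F t - G t + n * c with hD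
  have hDcont : ContinuousOn D (Set.Icc a b) := by
    apply ((hF.sub hG).add continuousOn_const)
  have haa : a ∈ Set.Icc a b := ⟨le_refl a, hab⟩
  have hbb : b ∈ Set.Icc a b := ⟨hab, le_refl b⟩
  have hDa : D a ≤ 0 := by
    have := (hGrange a haa).1
    simp only [hD, hFa]
    linarith
  have hDb : 0 ≤ D b := by
    rcases hend with h | h
    · have := (hGrange b hbb).2
      simp only [hD, h]
      push_cast at this ⊢
      linarith
    · have := (hFrange b hbb).1
      simp only [hD, h]
      linarith
  have := intermediate_value_Icc hab hDcont
  have h0 : (0 : ℝ) ∈ Set.Icc (D a) (D b) := ⟨hDa, hDb⟩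
  obtain ⟨t, ht, hDt⟩ := this h0
  exact ⟨t, ht, -n, by push_cast; simp only [hD] at hDt; linarith⟩
end

section
/- [Lifted form of Lemma 3.2] Let c > 0 and let F, G : ℝ → ℝ be continuous on an interval [a,b] with a ≤ b, and suppose |G(b) − G(a)| ≥ |F(b) − F(a)| + c. Then there exists t ∈ [a,b] with F(t) − G(t) ∈ cℤ. (Interpretation: on a cycle of circumference c, if during a common time period one agent's lift has net displacement of absolute value (k+2)c — it performs k+2 tours in a common sense of rotation — while the other agent's lift has net displacement of absolute value at most (k+1)c — it performs at most a partial tour and k full tours — then the two agents meet.) -/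
/-- **Lifted form of Lemma 3.2.**
Two agents move on a cycle of circumference `c > 0`, modeled via its universal cover `ℝ`:
two reals represent the same point of the cycle iff their difference lies in `cℤ`.
If, during a common time period `[a,b]`, the net displacement of one agent's lift exceeds
that of the other agent's lift by at least `c` in absolute value
(`|G b - G a| ≥ |F b - F a| + c`), then the two agents meet on the cycle. -/
theorem rendezvous_displacement_gap
    (c : ℝ) (hc : 0 < c) (a b : ℝ) (hab : a ≤ b) (F G : ℝ → ℝ)
    (hF : ContinuousOn F (Set.Icc a b)) (hG : ContinuousOn G (Set.Icc a b))
    (h : |F b - F a| + c ≤ |G b - G a|) :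
    ∃ t ∈ Set.Icc a b, ∃ m : ℤ, F t - G t = m * c := by
  set H : ℝ → ℝ := fun t => F t - G t with hHdef
  have hHc : ContinuousOn H (Set.Icc a b) := hF.sub hG
  have hgap : c ≤ |H b - H a| := by
    have h1 := abs_sub_abs_le_abs_sub (G b - G a) (F b - F a)
    have e : (G b - G a) - (F b - F a) = -(H b - H a) := by simp [hHdef]; ring
    rw [e, abs_neg] at h1
    linarith
  rcases abs_cases (H b - H a) with ⟨he, _⟩ | ⟨he, _⟩
  · -- H b - H a ≥ c
    have hba : c ≤ H b - H a := by linarith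
    set m : ℤ := ⌈H a / c⌉ with hm
    have h1 : H a ≤ m * c := by
      have := Int.le_ceil (H a / c)
      calc H a = (H a / c) * c := by field_simp
        _ ≤ m * c := by nlinarith
    have h2 : (m : ℝ) * c ≤ H b := by
      have := Int.ceil_lt_add_one (H a / c)
      have : (m : ℝ) * c < H a + c := by
        calc (m : ℝ) * c < (H a / c + 1) * c := by nlinarith
          _ = H a + c := by field_simp
      linarith
    obtain ⟨t, ht, hte⟩ := intermediate_value_Icc hab hHc ⟨h1, h2⟩
    exact ⟨t, ht, m, hte⟩
  · have hba : c ≤ H a - H b := by linarith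
    set m : ℤ := ⌊H a / c⌋ with hm
    have h1 : (m : ℝ) * c ≤ H a := by
      have := Int.floor_le (H a / c)
      calc (m : ℝ) * c ≤ (H a / c) * c := by nlinarith
        _ = H a := by field_simp
    have h2 : H b ≤ (m : ℝ) * c := by
      have := Int.sub_one_lt_floor (H a / c)
      have : H a - c < (m : ℝ) * c := by
        calc H a - c = (H a / c - 1) * c := by field_simp
          _ < (m : ℝ) * c := by nlinarith
      linarith
    obtain ⟨t, ht, hte⟩ := intermediate_value_Icc' hab hHc ⟨h2, h1⟩
    exact ⟨t, ht, m, hte⟩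
end

section
/- [Lemma 3.2] Let c > 0, p ≥ 1, let w : ℤ → ℝ model a cycle with p vertices and circumference c as in the context, and let k ≥ 0 be an integer. Let f₂ be a walk of a route that is the concatenation of k+2 tours starting at some vertex index s₂, where the j-th tour is in an arbitrary direction ε_j ∈ {+1,−1} and starts at the vertex index where the previous tour ended (so every tour starts and ends at an index congruent to s₂ mod p). Let f₁ be a walk of a route that is either the concatenation of a monotone route of at most p steps (a partial tour) followed by at most k tours, or the concatenation of at most k tours followed by a monotone route of at most p steps, each part starting at the vertex index where the preceding part ended. Then f₁ and f₂ meet, i.e., there exists t ∈ [0,1] with f₁(t) − f₂(t) ∈ cℤ. -/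
/- A cycle with `p ≥ 1` vertices and circumference `c > 0` is modeled via its universal
cover: a strictly increasing `w : ℤ → ℝ` with `w (i + p) = w i + c`; the value `w i` is the
lift of the `i`-th vertex, and two reals represent the same point of the cycle iff their
difference lies in `cℤ`. -/

/-- A walk of the route `q 0, q 1, …, q N` (a sequence of vertex indices with consecutive
indices differing by `1` in absolute value): a continuous `f : [0,1] → ℝ` together with
times `0 = t 0 ≤ t 1 ≤ … ≤ t N = 1` such that `f (t j) = w (q j)` and, on `[t j, t (j+1)]`,
`f` stays in the closed interval with endpoints `w (q j)` and `w (q (j+1))`. -/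
def IsWalk (w : ℤ → ℝ) (N : ℕ) (q : ℕ → ℤ) (f : ℝ → ℝ) : Prop :=
  ContinuousOn f (Set.Icc 0 1) ∧
  ∃ t : ℕ → ℝ, t 0 = 0 ∧ t N = 1 ∧ (∀ j, j < N → t j ≤ t (j + 1)) ∧
    (∀ j, j ≤ N → f (t j) = w (q j)) ∧
    (∀ j, j < N → ∀ s ∈ Set.Icc (t j) (t (j + 1)),
      f s ∈ Set.uIcc (w (q j)) (w (q (j + 1))))

/-- The indices `q m0, …, q (m0 + n * p)` of the route `q` form a concatenation of `n`
tours of the cycle with `p` vertices: the `j`-th tour starts at the vertex index where the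
previous one ended and is the route `s, s + ε, s + 2ε, …, s + εp` for some direction
`ε ∈ {+1, -1}`. -/
def ToursFrom (p : ℕ) (m0 : ℕ) (n : ℕ) (q : ℕ → ℤ) : Prop :=
  ∀ j, j < n → ∃ ε : ℤ, (ε = 1 ∨ ε = -1) ∧
    ∀ i, i ≤ p → q (m0 + j * p + i) = q (m0 + j * p) + ε * i

/-- The indices `q m0, …, q (m0 + M)` form a monotone route: all steps are the same value
`ε ∈ {+1, -1}`. -/
def MonotoneRouteFrom (m0 : ℕ) (M : ℕ) (q : ℕ → ℤ) : Prop :=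
  ∃ ε : ℤ, (ε = 1 ∨ ε = -1) ∧ ∀ i, i ≤ M → q (m0 + i) = q m0 + ε * i

/-! If the walks never meet, `f₁ - f₂` stays in one open interval `(m c, (m + 1) c)`. At the end
of each tour `f₂` sits on a lift of its start vertex `s₂`, so `f₁` sits strictly inside the arc
of length `c` between two consecutive lifts of `s₂`, and consecutive tour ends give different
arcs. Hence the edges of the route of `f₁` switch arcs at least `k + 2` times, each time at a
vertex lying over `s₂`. But a monotone route of at most `p` steps has at most one vertex over
`s₂` among its first `p` vertices, and the route of `f₁` consists of at most `k + 1` of them. -/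

open Finset

lemma map_add_mul_of_map_add_const {w : ℤ → ℝ} {p : ℤ} {c : ℝ}
    (hwp : ∀ i, w (i + p) = w i + c) (i n : ℤ) : w (i + n * p) = w i + n * c := by
  simpa using AddConstMapClass.map_add_zsmul (⟨w, hwp⟩ : AddConstMap ℤ ℝ p c) i n

lemma exists_forall_lt_lt_of_forall_ne_int_mul {S : Set ℝ} {g : ℝ → ℝ} {c : ℝ} (hc : 0 < c)
    (hS : IsPreconnected S) (hg : ContinuousOn g S) (hne : ∀ t ∈ S, ∀ m : ℤ, g t ≠ m * c) :
    ∃ m : ℤ, ∀ t ∈ S, m * c < g t ∧ g t < (m + 1) * c := by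
  rcases S.eq_empty_or_nonempty with rfl | ⟨t₀, ht₀⟩
  · exact ⟨0, by simp⟩
  have hT : ∀ {x y}, x ∈ g '' S → y ∈ g '' S → Set.Icc x y ⊆ g '' S :=
    (hS.image g hg).Icc_subset
  have hlo : (⌊g t₀ / c⌋ : ℝ) * c ≤ g t₀ := (le_div_iff₀ hc).1 (Int.floor_le _)
  have hhi : g t₀ < (⌊g t₀ / c⌋ + 1) * c := (div_lt_iff₀ hc).1 (Int.lt_floor_add_one _)
  refine ⟨⌊g t₀ / c⌋, fun t ht => ⟨lt_of_not_ge fun h => ?_, lt_of_not_ge fun h => ?_⟩⟩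
  · obtain ⟨t', ht', he⟩ := hT (Set.mem_image_of_mem g ht) (Set.mem_image_of_mem g ht₀) ⟨h, hlo⟩
    exact hne t' ht' _ he
  · obtain ⟨t', ht', he⟩ := hT (Set.mem_image_of_mem g ht₀) (Set.mem_image_of_mem g ht) ⟨hhi.le, h⟩
    exact hne t' ht' (⌊g t₀ / c⌋ + 1) (by rw [he]; push_cast; ring)

lemma exists_ne_succ_of_ne {α : Type*} {F : ℕ → α} {a b : ℕ} (hab : a ≤ b) (hne : F a ≠ F b) :
    ∃ i, a ≤ i ∧ i < b ∧ F i ≠ F (i + 1) := by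
  by_contra! h
  have key : ∀ n, a ≤ n → n ≤ b → F a = F n := by
    intro n han
    induction n, han using Nat.le_induction with
    | base => exact fun _ => rfl
    | succ n han ih => exact fun hnb => by rw [ih (by omega), h n han (by omega)]
  exact hne (key b hab le_rfl)

lemma Int.dvd_of_sub_one_ediv_ne {p x : ℤ} (hp : 0 < p) (h : (x - 1) / p ≠ x / p) : p ∣ x := by
  by_contra hx
  have hlt : x / p * p < x :=
    lt_of_le_of_ne (Int.ediv_mul_le x hp.ne') fun he => hx ⟨x / p, by linarith⟩
  exact h ((Int.ediv_eq_iff_of_pos hp).2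
    ⟨by omega, by linarith [Int.lt_ediv_add_one_mul_self x hp]⟩)

/-- The index `n` of the arc `[s + n p, s + (n + 1) p]` that contains the edge between the
vertex indices `a` and `b = a ± 1`. -/
def edgeCell (p : ℕ) (s a b : ℤ) : ℤ := (min a b - s) / p

lemma edgeCell_eq {w : ℤ → ℝ} (hw : StrictMono w) {p : ℕ} {s a b V : ℤ} {x : ℝ}
    (hab : |b - a| = 1) (hx : x ∈ Set.uIcc (w a) (w b)) (hV : (p : ℤ) ∣ V - s)
    (hlo : w V < x) (hhi : x < w (V + p)) : edgeCell p s a b = (V - s) / p := by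
  have hp : (0 : ℤ) < p := by
    have := hw.lt_iff_lt.1 (hlo.trans hhi); omega
  have hmin : w (min a b) ≤ x := hw.monotone.map_min.trans_le hx.1
  have hmax : x ≤ w (max a b) := hx.2.trans_eq hw.monotone.map_max.symm
  have hmin_lt : min a b < V + p := hw.lt_iff_lt.1 (hmin.trans_lt hhi)
  have hlt_max : V < max a b := hw.lt_iff_lt.1 (hlo.trans_le hmax)
  obtain ⟨n, hn⟩ := hV
  rw [edgeCell, hn, Int.mul_ediv_cancel_left _ hp.ne', Int.ediv_eq_iff_of_pos hp]
  rw [mul_comm] at hn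
  rcases (abs_eq zero_le_one).1 hab with h | h <;> constructor <;> omega

lemma dvd_sub_of_edgeCell_ne {p : ℕ} (hp : 1 ≤ p) {s a b d : ℤ} (hab : |b - a| = 1)
    (hbd : |d - b| = 1) (h : edgeCell p s a b ≠ edgeCell p s b d) : (p : ℤ) ∣ b - s := by
  have h₁ : min a b = b - 1 ∨ min a b = b := by
    rcases (abs_eq zero_le_one).1 hab with h | h <;> omega
  have h₂ : min b d = b - 1 ∨ min b d = b := by
    rcases (abs_eq zero_le_one).1 hbd with h | h <;> omega
  refine Int.dvd_of_sub_one_ediv_ne (by exact_mod_cast hp) ?_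
  rw [sub_right_comm]
  unfold edgeCell at h
  rcases h₁ with h₁ | h₁ <;> rcases h₂ with h₂ | h₂ <;> rw [h₁, h₂] at h <;> tauto

lemma MonotoneRouteFrom.abs_sub_eq_one {a M e : ℕ} {q : ℕ → ℤ} (h : MonotoneRouteFrom a M q)
    (hae : a ≤ e) (he : e < a + M) : |q (e + 1) - q e| = 1 := by
  obtain ⟨ε, hε, hq⟩ := h
  obtain ⟨i, rfl⟩ := Nat.exists_eq_add_of_le hae
  rw [add_assoc, hq (i + 1) (by omega), hq i (by omega)]
  rcases hε with rfl | rfl <;> simp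

lemma MonotoneRouteFrom.card_filter_dvd_le_one {p a M : ℕ} {q : ℕ → ℤ}
    (h : MonotoneRouteFrom a M q) (hM : M ≤ p) (s : ℤ) :
    #{v ∈ Ico a (a + M) | (p : ℤ) ∣ q v - s} ≤ 1 := by
  obtain ⟨ε, hε, hq⟩ := h
  refine card_le_one.2 fun u hu v hv => ?_
  simp only [mem_filter, mem_Ico] at hu hv
  obtain ⟨i, rfl⟩ := Nat.exists_eq_add_of_le hu.1.1
  obtain ⟨j, rfl⟩ := Nat.exists_eq_add_of_le hv.1.1
  have hdvd : (p : ℤ) ∣ ε * (i - j) := by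
    have := dvd_sub hu.2 hv.2
    rwa [hq i (by omega), hq j (by omega), sub_sub_sub_cancel_right, add_sub_add_left_eq_sub,
      ← mul_sub] at this
  replace hdvd : (p : ℤ) ∣ i - j := by
    rcases hε with rfl | rfl
    · simpa using hdvd
    · exact dvd_sub_comm.1 (by simpa using hdvd)
  have := Int.eq_zero_of_abs_lt_dvd hdvd (abs_sub_lt_iff.2 ⟨by omega, by omega⟩)
  omega

lemma card_filter_Ico_le_add {α : Type*} [LinearOrder α] [LocallyFiniteOrder α] {P : α → Prop}
    [DecidablePred P] {a b c : α} (hab : a ≤ b) (hbc : b ≤ c) :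
    #{v ∈ Ico a c | P v} ≤ #{v ∈ Ico a b | P v} + #{v ∈ Ico b c | P v} := by
  rw [← Ico_union_Ico_eq_Ico hab hbc, filter_union]
  exact card_union_le _ _

section ToursFrom

variable {p a n : ℕ} {q : ℕ → ℤ}

lemma toursFrom_succ :
    ToursFrom p a (n + 1) q ↔ ToursFrom p a n q ∧ MonotoneRouteFrom (a + n * p) p q :=
  Nat.forall_lt_succ_right

lemma ToursFrom.abs_sub_eq_one (h : ToursFrom p a n q) {e : ℕ} (hae : a ≤ e)
    (he : e < a + n * p) : |q (e + 1) - q e| = 1 := by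
  induction n with
  | zero => omega
  | succ n ih =>
    obtain ⟨h, hlast⟩ := toursFrom_succ.1 h
    rcases lt_or_ge e (a + n * p) with he' | he'
    · exact ih h he'
    · exact hlast.abs_sub_eq_one he' (by linarith [Nat.succ_mul n p])

lemma ToursFrom.card_filter_dvd_le (h : ToursFrom p a n q) (s : ℤ) :
    #{v ∈ Ico a (a + n * p) | (p : ℤ) ∣ q v - s} ≤ n := by
  induction n with
  | zero => simp
  | succ n ih =>
    obtain ⟨h, hlast⟩ := toursFrom_succ.1 h
    rw [Nat.succ_mul, ← add_assoc]
    calc _ ≤ #{v ∈ Ico a (a + n * p) | (p : ℤ) ∣ q v - s}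
          + #{v ∈ Ico (a + n * p) (a + n * p + p) | (p : ℤ) ∣ q v - s} :=
          card_filter_Ico_le_add (by omega) (by omega)
      _ ≤ n + 1 := add_le_add (ih h) (hlast.card_filter_dvd_le_one le_rfl s)

lemma ToursFrom.abs_sub_eq (h : ToursFrom p a n q) {j : ℕ} (hj : j < n) :
    |q (a + (j + 1) * p) - q (a + j * p)| = p := by
  obtain ⟨ε, hε, hq⟩ := h j hj
  rw [Nat.succ_mul, ← add_assoc, hq p le_rfl]
  rcases hε with rfl | rfl <;> simp

lemma ToursFrom.dvd_sub (h : ToursFrom p a n q) {j : ℕ} (hj : j ≤ n) :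
    (p : ℤ) ∣ q (a + j * p) - q a := by
  induction j with
  | zero => simp
  | succ j ih =>
    have hstep : (p : ℤ) ∣ q (a + (j + 1) * p) - q (a + j * p) := by
      rw [← dvd_abs, h.abs_sub_eq hj]
    have := dvd_add hstep (ih (by omega))
    rwa [sub_add_sub_cancel] at this

end ToursFrom

section IsWalk

variable {w : ℤ → ℝ} {N : ℕ} {q : ℕ → ℤ} {f : ℝ → ℝ}

lemma IsWalk.exists_monotoneOn_times (hf : IsWalk w N q f) :
    ∃ t : ℕ → ℝ, MonotoneOn t (Set.Iic N) ∧
      ∀ j ≤ N, t j ∈ Set.Icc (0 : ℝ) 1 ∧ f (t j) = w (q j) := by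
  obtain ⟨-, t, ht0, htN, hstep, hval, -⟩ := hf
  have hmono : MonotoneOn t (Set.Iic N) := monotoneOn_of_le_succ Set.ordConnected_Iic
    fun j _ _ hj => by simpa using hstep j (Order.succ_le_iff.1 hj)
  refine ⟨t, hmono, fun j hj => ⟨⟨?_, ?_⟩, hval j hj⟩⟩
  · simpa [ht0] using hmono (Nat.zero_le N) hj (Nat.zero_le j)
  · simpa [htN] using hmono hj (le_refl N) hj

lemma IsWalk.exists_monotone_edge (hf : IsWalk w N q f) :
    ∃ E : ℝ → ℕ, Monotone E ∧ ∀ τ ∈ Set.Icc (0 : ℝ) 1,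
      E τ < N ∧ f τ ∈ Set.uIcc (w (q (E τ))) (w (q (E τ + 1))) := by
  classical
  obtain ⟨-, σ, hσ0, hσN, -, -, hseg⟩ := hf
  have hN : 0 < N := Nat.pos_of_ne_zero fun h => by simp [h, hσ0] at hσN
  refine ⟨fun τ => Nat.findGreatest (fun i => σ i ≤ τ) (N - 1),
    fun τ τ' h => Nat.findGreatest_mono_left (fun i hi => hi.trans h) _, fun τ hτ => ?_⟩
  set e := Nat.findGreatest (fun i => σ i ≤ τ) (N - 1)
  have he : e < N := (Nat.findGreatest_le _).trans_lt (by omega)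
  have hσe : σ e ≤ τ :=
    Nat.findGreatest_spec (P := fun i => σ i ≤ τ) (Nat.zero_le _) (hσ0.trans_le hτ.1)
  refine ⟨he, hseg e he τ ⟨hσe, ?_⟩⟩
  rcases (Nat.succ_le_of_lt he).lt_or_eq with h | h
  · exact le_of_not_ge (Nat.findGreatest_is_greatest (Nat.lt_succ_self e) (by omega))
  · rw [← Nat.succ_eq_add_one, h, hσN]
    exact hτ.2

end IsWalk

lemma le_card_filter_of_apply_ne {α : Type*} {F : ℕ → α} {P : ℕ → Prop} [DecidablePred P]
    {n N : ℕ} {e : ℕ → ℕ} (he : MonotoneOn e (Set.Iic n)) (hlt : e n < N)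
    (hne : ∀ j < n, F (e j) ≠ F (e (j + 1))) (hP : ∀ i, i + 1 < N → F i ≠ F (i + 1) → P (i + 1)) :
    n ≤ #{v ∈ range N | P v} := by
  have he' : ∀ j j', j ≤ j' → j' ≤ n → e j ≤ e j' := fun j j' h hj' => he (h.trans hj') hj' h
  have hchange : ∀ j < n, ∃ i, e j ≤ i ∧ i < e (j + 1) ∧ F i ≠ F (i + 1) := fun j hj =>
    exists_ne_succ_of_ne (he' j (j + 1) (by omega) hj) (hne j hj)
  choose! i hi using hchange
  have hi_mono : StrictMonoOn i (range n) := fun j hj j' hj' hjj' => by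
    simp only [coe_range, Set.mem_Iio] at hj hj'
    linarith [(hi j hj).2.1, (hi j' hj').1, he' (j + 1) j' hjj' hj'.le]
  calc n = #(range n) := (card_range n).symm
    _ ≤ _ := card_le_card_of_injOn (fun j => i j + 1) (fun j hj => ?_)
        ((add_left_injective 1).comp_injOn hi_mono.injOn)
  simp only [coe_range, Set.mem_Iio, coe_filter, mem_range] at hj ⊢
  have hlt : i j + 1 < N := by linarith [(hi j hj).2.1, he' (j + 1) n hj le_rfl]
  exact ⟨hlt, hP _ hlt (hi j hj).2.2⟩

theorem le_card_filter_dvd_of_forall_ne {c : ℝ} (hc : 0 < c) {p : ℕ} (hp : 1 ≤ p)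
    {w : ℤ → ℝ} (hw : StrictMono w) (hwp : ∀ i : ℤ, w (i + p) = w i + c)
    {n : ℕ} {q₂ : ℕ → ℤ} (hq₂ : ToursFrom p 0 n q₂) {f₂ : ℝ → ℝ} (hf₂ : IsWalk w (n * p) q₂ f₂)
    {N : ℕ} {q₁ : ℕ → ℤ} (hq₁ : ∀ e < N, |q₁ (e + 1) - q₁ e| = 1) {f₁ : ℝ → ℝ}
    (hf₁ : IsWalk w N q₁ f₁) (hne : ∀ t ∈ Set.Icc (0 : ℝ) 1, ∀ m : ℤ, f₁ t - f₂ t ≠ m * c) :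
    n ≤ #{v ∈ range N | (p : ℤ) ∣ q₁ v - q₂ 0} := by
  obtain ⟨m, hm⟩ :=
    exists_forall_lt_lt_of_forall_ne_int_mul hc isPreconnected_Icc (hf₁.1.sub hf₂.1) hne
  obtain ⟨t, htmono, ht⟩ := hf₂.exists_monotoneOn_times
  obtain ⟨E, hEmono, hE⟩ := hf₁.exists_monotone_edge
  have hmul : ∀ j ≤ n, j * p ≤ n * p := fun j hj => Nat.mul_le_mul_right p hj
  have hdvd : ∀ j ≤ n, (p : ℤ) ∣ q₂ (j * p) + m * p - q₂ 0 := fun j hj => by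
    rw [add_sub_right_comm]
    exact dvd_add (by simpa using hq₂.dvd_sub hj) (dvd_mul_left _ _)
  have hcell : ∀ j ≤ n, edgeCell p (q₂ 0) (q₁ (E (t (j * p)))) (q₁ (E (t (j * p)) + 1)) =
      (q₂ (j * p) + m * p - q₂ 0) / p := by
    intro j hj
    obtain ⟨ht01, hf₂t⟩ := ht (j * p) (hmul j hj)
    obtain ⟨hlt, hmem⟩ := hE _ ht01
    have hstrip : m * c < f₁ _ - f₂ _ ∧ f₁ _ - f₂ _ < (m + 1) * c := hm _ ht01
    refine edgeCell_eq hw (hq₁ _ hlt) hmem (hdvd j hj) ?_ ?_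
    · rw [map_add_mul_of_map_add_const hwp, ← hf₂t]
      linarith [hstrip.1]
    · rw [add_assoc, ← add_one_mul, map_add_mul_of_map_add_const hwp, ← hf₂t]
      push_cast
      linarith [hstrip.2]
  refine le_card_filter_of_apply_ne (F := fun i => edgeCell p (q₂ 0) (q₁ i) (q₁ (i + 1)))
    (fun j hj j' hj' h => hEmono (htmono (hmul j hj) (hmul j' hj') (Nat.mul_le_mul_right p h)))
    (hE _ (ht _ le_rfl).1).1 (fun j hj => ?_)
    (fun i hi h => dvd_sub_of_edgeCell_ne hp (hq₁ i (by omega)) (hq₁ (i + 1) hi) h)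
  rw [hcell j hj.le, hcell (j + 1) hj, Ne, Int.ediv_left_inj (hdvd j hj.le) (hdvd (j + 1) hj),
    sub_left_inj, add_left_inj]
  intro h
  have := hq₂.abs_sub_eq hj
  rw [zero_add, zero_add, ← h, sub_self, abs_zero] at this
  omega

theorem rendezvous_tours_vs_fewer_tours_general
    (c : ℝ) (hc : 0 < c) (p : ℕ) (hp : 1 ≤ p)
    (w : ℤ → ℝ) (hw : StrictMono w) (hwp : ∀ i : ℤ, w (i + p) = w i + c)
    (k : ℕ) (q₂ : ℕ → ℤ)
    (hq₂ : ToursFrom p 0 (k + 2) q₂)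
    (f₂ : ℝ → ℝ) (hf₂ : IsWalk w ((k + 2) * p) q₂ f₂)
    (q₁ : ℕ → ℤ) (f₁ : ℝ → ℝ)
    (h₁ : (∃ M k', M ≤ p ∧ k' ≤ k ∧ MonotoneRouteFrom 0 M q₁ ∧
            ToursFrom p M k' q₁ ∧ IsWalk w (M + k' * p) q₁ f₁) ∨
          (∃ M k', M ≤ p ∧ k' ≤ k ∧ ToursFrom p 0 k' q₁ ∧
            MonotoneRouteFrom (k' * p) M q₁ ∧ IsWalk w (k' * p + M) q₁ f₁)) :
    ∃ t ∈ Set.Icc (0 : ℝ) 1, ∃ m : ℤ, f₁ t - f₂ t = m * c := by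
  by_contra! hne
  obtain ⟨N, hf₁, hq₁, hcard⟩ : ∃ N, IsWalk w N q₁ f₁ ∧ (∀ e < N, |q₁ (e + 1) - q₁ e| = 1) ∧
      #{v ∈ range N | (p : ℤ) ∣ q₁ v - q₂ 0} ≤ k + 1 := by
    rcases h₁ with ⟨M, k', hM, hk', hmono, htours, hf₁⟩ | ⟨M, k', hM, hk', htours, hmono, hf₁⟩
    · refine ⟨_, hf₁, fun e he => ?_, ?_⟩
      · rcases lt_or_ge e M with h | h
        · exact hmono.abs_sub_eq_one (Nat.zero_le e) (by omega)
        · exact htours.abs_sub_eq_one h he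
      · rw [range_eq_Ico]
        calc _ ≤ _ := card_filter_Ico_le_add (Nat.zero_le M) (Nat.le_add_right M (k' * p))
          _ ≤ 1 + k' := add_le_add (by simpa using hmono.card_filter_dvd_le_one hM (q₂ 0))
              (htours.card_filter_dvd_le _)
          _ ≤ k + 1 := by omega
    · refine ⟨_, hf₁, fun e he => ?_, ?_⟩
      · rcases lt_or_ge e (k' * p) with h | h
        · exact htours.abs_sub_eq_one (Nat.zero_le e) (by omega)
        · exact hmono.abs_sub_eq_one h he
      · rw [range_eq_Ico]
        calc _ ≤ _ := card_filter_Ico_le_add (Nat.zero_le (k' * p)) (Nat.le_add_right (k' * p) M)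
          _ ≤ k' + 1 := add_le_add (by simpa using htours.card_filter_dvd_le (q₂ 0))
              (hmono.card_filter_dvd_le_one hM _)
          _ ≤ k + 1 := by omega
  have := le_card_filter_dvd_of_forall_ne hc hp hw hwp hq₂ hf₂ hq₁ hf₁ hne
  omega

/-- **Lemma 3.2.** On a cycle with `p ≥ 1` vertices and circumference `c > 0`, let `f₂` be
a walk of a route which is the concatenation of `k + 2` tours starting at vertex index
`s₂` (each tour in an arbitrary direction, starting where the previous tour ended), and
let `f₁` be a walk of a route which is either a partial tour (a monotone route of at most
`p` steps) followed by at most `k` tours, or at most `k` tours followed by a partial tour.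
Then the two walks meet: `f₁ t - f₂ t ∈ cℤ` for some `t ∈ [0,1]`. -/
theorem rendezvous_tours_vs_fewer_tours
    (c : ℝ) (hc : 0 < c) (p : ℕ) (hp : 1 ≤ p)
    (w : ℤ → ℝ) (hw : StrictMono w) (hwp : ∀ i : ℤ, w (i + p) = w i + c)
    (k : ℕ) (s₂ : ℤ) (q₂ : ℕ → ℤ) (hs₂ : q₂ 0 = s₂)
    (hq₂ : ToursFrom p 0 (k + 2) q₂)
    (f₂ : ℝ → ℝ) (hf₂ : IsWalk w ((k + 2) * p) q₂ f₂)
    (q₁ : ℕ → ℤ) (f₁ : ℝ → ℝ)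
    (h₁ : (∃ M k', M ≤ p ∧ k' ≤ k ∧ MonotoneRouteFrom 0 M q₁ ∧
            ToursFrom p M k' q₁ ∧ IsWalk w (M + k' * p) q₁ f₁) ∨
          (∃ M k', M ≤ p ∧ k' ≤ k ∧ ToursFrom p 0 k' q₁ ∧
            MonotoneRouteFrom (k' * p) M q₁ ∧ IsWalk w (k' * p + M) q₁ f₁)) :
    ∃ t ∈ Set.Icc (0 : ℝ) 1, ∃ m : ℤ, f₁ t - f₂ t = m * c :=
  rendezvous_tours_vs_fewer_tours_general c hc p hp w hw hwp k q₂ hq₂ f₂ hf₂ q₁ f₁ h₁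
end

section
/- [Modified labels are suffix-distinguishable] For all positive integers l and L with l ≠ L, the modified label l* is not a suffix of the modified label L*. In particular, there exists an index i with 0 ≤ i < min(|l*|, |L*|) such that the (|l*| − i)-th bit of l* differs from the (|L*| − i)-th bit of L* (bits counted from the left, starting at 1). -/
/-!
Read backwards, `μ*` is `|μ|` zeros, a one, then the bits of `μ` from the least significant one
on. The position of that first one recovers `|μ|`, so `l*` can only be a suffix of `L*` if both
labels have the same length, in which case they are equal and `l = L`. Two lists that agree on
all of their last `min` positions are comparable for the suffix order, which gives the
differing bit.
-/

/-- The modified label `μ*` of a positive integer `μ`: its binary representation (most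
significant bit first), followed by a single `1`, followed by `|μ|` zeros, where
`|μ| = ⌊log₂ μ⌋ + 1` is the length of the binary representation of `μ`.
(For `μ > 0`, `Nat.bits μ` is the binary representation of `μ`, least significant bit
first, of length `|μ|`.) Thus `μ*` has length `2|μ| + 1`. -/
def modifiedLabel (μ : ℕ) : List Bool :=
  (Nat.bits μ).reverse ++ [true] ++ List.replicate (Nat.bits μ).length false

theorem Nat.bits_injective : Function.Injective Nat.bits := fun m n h =>
  Nat.eq_of_testBit_eq fun i => by rw [Nat.testBit_eq_inth, Nat.testBit_eq_inth, h]

theorem List.IsSuffix.of_getD_eq {α : Type*} {a b : List α} (d : α) (hlen : a.length ≤ b.length)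
    (h : ∀ i < a.length, a.getD (a.length - 1 - i) d = b.getD (b.length - 1 - i) d) :
    a <:+ b := by
  refine List.suffix_iff_getElem.2 ⟨hlen, fun j hj => ?_⟩
  have hj' := h (a.length - 1 - j) (by omega)
  rw [List.getD_eq_getElem _ _ (by omega), List.getD_eq_getElem _ _ (by omega)] at hj'
  simp only [show a.length - 1 - (a.length - 1 - j) = j by omega,
    show b.length - 1 - (a.length - 1 - j) = j + b.length - a.length by omega] at hj'
  exact hj'.symm

theorem List.replicate_append_cons_prefix {α : Type*} {a b : α} (hab : a ≠ b) {s t : List α}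
    {m n : ℕ} (h : replicate m a ++ b :: s <+: replicate n a ++ b :: t) : m = n ∧ s <+: t := by
  induction m generalizing n with
  | zero =>
    cases n with
    | zero => simpa using h
    | succ n => exact absurd (List.cons_prefix_cons.1 h).1 hab.symm
  | succ m ih =>
    cases n with
    | zero => exact absurd (List.cons_prefix_cons.1 h).1 hab
    | succ n =>
      obtain ⟨hmn, hst⟩ := ih (List.cons_prefix_cons.1 h).2
      exact ⟨congrArg (· + 1) hmn, hst⟩

theorem modifiedLabel_reverse (μ : ℕ) :
    (modifiedLabel μ).reverse = List.replicate (Nat.bits μ).length false ++ true :: Nat.bits μ := by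
  simp [modifiedLabel]

theorem eq_of_modifiedLabel_isSuffix {l L : ℕ} (h : modifiedLabel l <:+ modifiedLabel L) :
    l = L := by
  rw [← List.reverse_prefix, modifiedLabel_reverse, modifiedLabel_reverse] at h
  obtain ⟨hlen, hbits⟩ := List.replicate_append_cons_prefix Bool.false_ne_true h
  exact Nat.bits_injective (hbits.eq_of_length hlen)

theorem modifiedLabel_not_suffix_general
    (l L : ℕ) (hlL : l ≠ L) :
    ¬ (modifiedLabel l <:+ modifiedLabel L) ∧
    ∃ i : ℕ, i < min (modifiedLabel l).length (modifiedLabel L).length ∧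
      (modifiedLabel l).getD ((modifiedLabel l).length - 1 - i) false ≠
        (modifiedLabel L).getD ((modifiedLabel L).length - 1 - i) false := by
  refine ⟨fun h => hlL (eq_of_modifiedLabel_isSuffix h), ?_⟩
  by_contra! hagree
  rcases le_total (modifiedLabel l).length (modifiedLabel L).length with hle | hle
  · exact hlL <| eq_of_modifiedLabel_isSuffix <|
      .of_getD_eq false hle fun i hi => hagree i (lt_min hi (by omega))
  · exact hlL <| Eq.symm <| eq_of_modifiedLabel_isSuffix <|
      .of_getD_eq false hle fun i hi => (hagree i (lt_min (by omega) hi)).symm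

/-- **Modified labels are suffix-distinguishable.** For distinct positive integers `l` and
`L`, the modified label `l*` is not a suffix of `L*`; in particular there is an index
`i` with `0 ≤ i < min |l*| |L*|` such that the `(|l*| - i)`-th bit of `l*` differs from
the `(|L*| - i)`-th bit of `L*` (bits counted from the left, starting at 1, i.e.
0-based positions `|l*| - i - 1` and `|L*| - i - 1`). -/
theorem modifiedLabel_not_suffix
    (l L : ℕ) (hl : 0 < l) (hL : 0 < L) (hlL : l ≠ L) :
    ¬ (modifiedLabel l <:+ modifiedLabel L) ∧
    ∃ i : ℕ, i < min (modifiedLabel l).length (modifiedLabel L).length ∧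
      (modifiedLabel l).getD ((modifiedLabel l).length - 1 - i) false ≠
        (modifiedLabel L).getD ((modifiedLabel L).length - 1 - i) false :=
  modifiedLabel_not_suffix_general l L hlL
end
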